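/- Let (G, H) be a Hecke pair, i.e. H ≤ G and [H : H ∩ gHg⁻¹] < ∞ for all g ∈ G. View G as a subgroup of the permutation group Sym(G/H) via left translation, give Sym(G/H) the topology of pointwise convergence, and let G̃, H̃ denote the closures of the images of G and H respectively. Then H̃ is an open subgroup of G̃, and H̃ is compact (being a closed subgroup of the compact group of permutations fixing the coset H and stabilizing each finite H-orbit of G/H, it is a profinite group); hence G̃ is a totally disconnected locally compact group with compact open subgroup H̃. -/

import Mathlib

/-!
Pointwise convergence makes every `{σ | σ x = y}` clopen in `Sym(X)`, so `Sym(X)` is a totally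
disconnected Hausdorff topological group, and the closure of the image of a point stabiliser is the
trace of the open set `{σ | σ x = x}` on the closure of the image of the whole group; for `X = G/H`
and `x = H` this stabiliser is `H`. The stabiliser of `gH` in `H` is `H ∩ gHg⁻¹`, so the Hecke
condition says that the `H`-orbits on `G/H` are finite. The permutations mapping each of these finite
orbits into itself form a compact set by Tychonoff (a pointwise limit of such permutations is
injective and maps each finite orbit onto itself, hence is again a permutation), and it contains
`H̃`. Finally, a subgroup containing a compact neighbourhood of `1` is locally compact.
-/

/-- The topology of pointwise convergence on the permutation group of a (discrete) set. -/
noncomputable instance permPointwiseTopology (α : Type*) : TopologicalSpace (Equiv.Perm α) :=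
  TopologicalSpace.induced (fun σ : Equiv.Perm α => (σ : α → α))
    (@Pi.topologicalSpace α (fun _ => α) (fun _ => ⊥))

open Set Topology MulAction

theorem isClosed_setOf_injective {α β : Type*} [TopologicalSpace β] [DiscreteTopology β] :
    IsClosed {f : α → β | Function.Injective f} := by
  simp only [Function.Injective, ofPred_forall]
  refine isClosed_iInter fun a => isClosed_iInter fun b => ?_
  show IsClosed ((fun f : α → β => (f a, f b)) ⁻¹' {p | p.1 = p.2 → a = b})
  exact (isClosed_discrete _).preimage (by fun_prop)

theorem isClosed_setOf_forall_mapsTo {ι α β : Type*} [TopologicalSpace β] [DiscreteTopology β]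
    (s : ι → Set α) (t : ι → Set β) :
    IsClosed {f : α → β | ∀ i, MapsTo f (s i) (t i)} := by
  simp only [MapsTo, ofPred_forall]
  exact isClosed_iInter fun i => isClosed_iInter fun x => isClosed_iInter fun _ =>
    (isClosed_discrete (t i)).preimage (continuous_apply x)

namespace Equiv.Perm

variable {α : Type*}

theorem isEmbedding_coeFn [TopologicalSpace α] [DiscreteTopology α] :
    IsEmbedding (fun σ : Perm α => (σ : α → α)) := by
  refine ⟨⟨?_⟩, DFunLike.coe_injective⟩
  rw [DiscreteTopology.eq_bot (α := α)]
  rfl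

theorem continuous_iff {X : Type*} [TopologicalSpace X] {f : X → Perm α} :
    Continuous f ↔ ∀ x y, IsOpen {p | f p x = y} := by
  let : TopologicalSpace α := ⊥
  have : DiscreteTopology α := ⟨rfl⟩
  rw [isEmbedding_coeFn.continuous_iff, continuous_pi_iff]
  simp only [continuous_discrete_rng]
  rfl

theorem isClopen_setOf_apply_eq (x y : α) : IsClopen {σ : Perm α | σ x = y} := by
  let : TopologicalSpace α := ⊥
  have : DiscreteTopology α := ⟨rfl⟩
  exact (isClopen_discrete {y}).preimage ((continuous_apply x).comp isEmbedding_coeFn.continuous)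

instance : IsTopologicalGroup (Perm α) where
  continuous_mul := continuous_iff.2 fun x y => by
    have : {p : Perm α × Perm α | (p.1 * p.2) x = y} =
        ⋃ z, {σ | σ z = y} ×ˢ {τ | τ x = z} := by
      ext; simp [eq_comm]
    rw [this]
    exact isOpen_iUnion fun z =>
      (isClopen_setOf_apply_eq z y).isOpen.prod (isClopen_setOf_apply_eq x z).isOpen
  continuous_inv := continuous_iff.2 fun x y => by
    simpa only [Perm.inv_eq_iff_eq, eq_comm (a := x)] using (isClopen_setOf_apply_eq y x).isOpen

instance : T2Space (Perm α) := by
  let : TopologicalSpace α := ⊥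
  have : DiscreteTopology α := ⟨rfl⟩
  exact isEmbedding_coeFn.t2Space

instance : TotallyDisconnectedSpace (Perm α) := by
  let : TopologicalSpace α := ⊥
  have : DiscreteTopology α := ⟨rfl⟩
  exact isEmbedding_coeFn.isTotallyDisconnected_range.mp
    (isTotallyDisconnected_of_totallyDisconnectedSpace _)

theorem isCompact_setOf_forall_mapsTo {O : α → Set α} (hO : ∀ x, (O x).Finite)
    (hmem : ∀ x, x ∈ O x) : IsCompact {σ : Perm α | ∀ x, MapsTo σ (O x) (O x)} := by
  let : TopologicalSpace α := ⊥
  have : DiscreteTopology α := ⟨rfl⟩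
  have himage : (fun σ : Perm α => (σ : α → α)) '' {σ | ∀ x, MapsTo σ (O x) (O x)} =
      {f | Function.Injective f} ∩ {f | ∀ x, MapsTo f (O x) (O x)} := by
    ext f
    constructor
    · rintro ⟨σ, hσ, rfl⟩
      exact ⟨σ.injective, hσ⟩
    · rintro ⟨hinj, hmaps⟩
      -- `f` is injective on the finite set `O y ∋ y` and maps it into itself, hence onto it.
      have hsurj : Function.Surjective f := fun y => by
        obtain ⟨z, -, hz⟩ :=
          ((hO y).injOn_iff_bijOn_of_mapsTo (hmaps y)).mp hinj.injOn |>.surjOn (hmem y)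
        exact ⟨z, hz⟩
      exact ⟨ofBijective f ⟨hinj, hsurj⟩, hmaps, rfl⟩
  rw [isEmbedding_coeFn.isCompact_iff, himage]
  exact (isCompact_univ_pi fun x => (hO x).isCompact).of_isClosed_subset
    (isClosed_setOf_injective.inter (isClosed_setOf_forall_mapsTo O O))
    fun f hf x _ => hf.2 x (hmem x)

end Equiv.Perm

theorem MulAction.isCompact_closure_range_toPermHom {G α : Type*} [Group G] [MulAction G α]
    (h : ∀ x : α, (orbit G x).Finite) : IsCompact (closure (range (toPermHom G α))) := by
  have hK := Equiv.Perm.isCompact_setOf_forall_mapsTo h mem_orbit_self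
  refine hK.of_isClosed_subset isClosed_closure (closure_minimal ?_ hK.isClosed)
  rintro _ ⟨g, rfl⟩ x y hy
  exact mem_orbit_of_mem_orbit g hy

theorem MulAction.closure_image_stabilizer {G α : Type*} [Group G] [MulAction G α] (x : α) :
    closure (toPermHom G α '' stabilizer G x) =
      {σ | σ x = x} ∩ closure (range (toPermHom G α)) := by
  have himage : toPermHom G α '' stabilizer G x = {σ | σ x = x} ∩ range (toPermHom G α) := by
    ext σ
    constructor
    · rintro ⟨g, hg, rfl⟩
      exact ⟨hg, g, rfl⟩
    · rintro ⟨hσ, g, rfl⟩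
      exact ⟨g, hσ, rfl⟩
  rw [himage]
  exact Subset.antisymm
    (subset_inter (closure_minimal inter_subset_left (Equiv.Perm.isClopen_setOf_apply_eq x x).isClosed)
      (closure_mono inter_subset_right))
    (Equiv.Perm.isClopen_setOf_apply_eq x x).isOpen.inter_closure

theorem Subgroup.finite_orbit_quotient_of_relIndex_ne_zero {G : Type*} [Group G] (H : Subgroup G)
    (h : ∀ g : G, (H.map (MulAut.conj g).toMonoidHom).relIndex H ≠ 0) (x : G ⧸ H) :
    (orbit H x).Finite := by
  obtain ⟨g, rfl⟩ := QuotientGroup.mk_surjective x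
  have hstab : stabilizer G (g : G ⧸ H) = H.map (MulAut.conj g).toMonoidHom := by
    simpa [stabilizer_quotient] using stabilizer_smul_eq_stabilizer_map_conj g ((1 : G) : G ⧸ H)
  have hindex : (orbit H (g : G ⧸ H)).ncard = (stabilizer G (g : G ⧸ H)).relIndex H := by
    rw [← index_stabilizer]
    rfl
  refine Set.finite_of_ncard_ne_zero ?_
  rw [hindex, hstab]
  exact h g

theorem Subgroup.locallyCompactSpace_of_isCompact_mem_nhdsWithin {G : Type*} [Group G]
    [TopologicalSpace G] [IsTopologicalGroup G] (Γ : Subgroup G) {K : Set G} (hK : IsCompact K)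
    (hKΓ : K ⊆ Γ) (hK1 : K ∈ 𝓝[(Γ : Set G)] 1) : LocallyCompactSpace Γ := by
  have himage : ((↑) : Γ → G) '' ((↑) ⁻¹' K) = K := image_preimage_eq_of_subset (by simpa using hKΓ)
  refine IsCompact.locallyCompactSpace_of_mem_nhds_of_group (K := (↑) ⁻¹' K) (x := 1) ?_ ?_
  · rwa [Subtype.isCompact_iff, himage]
  · rw [mem_nhds_subtype_iff_nhdsWithin]
    convert hK1
    exacts [rfl, himage]

/-- Schlichting completion of a Hecke pair `(G, H)`: the closure `H̃` of the image of `H` in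
`Sym(G/H)` (with the topology of pointwise convergence) is a compact subgroup which is open
in the closure `G̃` of the image of `G`; moreover `G̃` is totally disconnected and locally
compact. -/
theorem schlichting_completion
    {G : Type*} [Group G] (H : Subgroup G)
    (hecke : ∀ g : G, (Subgroup.map (MulAut.conj g).toMonoidHom H).relIndex H ≠ 0) :
    IsCompact (closure (⇑(MulAction.toPermHom G (G ⧸ H)) '' (H : Set G))) ∧
    (∃ U : Set (Equiv.Perm (G ⧸ H)), IsOpen U ∧
      closure (⇑(MulAction.toPermHom G (G ⧸ H)) '' (H : Set G)) =
        U ∩ closure (Set.range ⇑(MulAction.toPermHom G (G ⧸ H)))) ∧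
    TotallyDisconnectedSpace ↥(closure (Set.range ⇑(MulAction.toPermHom G (G ⧸ H)))) ∧
    LocallyCompactSpace ↥(closure (Set.range ⇑(MulAction.toPermHom G (G ⧸ H)))) := by
  set φ := toPermHom G (G ⧸ H)
  set o : G ⧸ H := ((1 : G) : G ⧸ H)
  have hopen : closure (φ '' H) = {σ | σ o = o} ∩ closure (range φ) := by
    have := closure_image_stabilizer (G := G) o
    rwa [stabilizer_quotient] at this
  have hrange : φ '' H = range (toPermHom H (G ⧸ H)) := by
    rw [image_eq_range]
    rfl
  have hcompact : IsCompact (closure (φ '' H)) := by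
    rw [hrange]
    exact isCompact_closure_range_toPermHom (H.finite_orbit_quotient_of_relIndex_ne_zero hecke)
  refine ⟨hcompact, ⟨_, (Equiv.Perm.isClopen_setOf_apply_eq o o).isOpen, hopen⟩, inferInstance, ?_⟩
  have hclosure : closure (range φ) = (φ.range.topologicalClosure : Set (Equiv.Perm (G ⧸ H))) := by
    rw [Subgroup.topologicalClosure_coe, MonoidHom.coe_range]
  rw [hclosure] at hopen ⊢
  exact φ.range.topologicalClosure.locallyCompactSpace_of_isCompact_mem_nhdsWithin hcompact
    (hopen.trans_subset inter_subset_right)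
    (mem_nhdsWithin.2 ⟨_, (Equiv.Perm.isClopen_setOf_apply_eq o o).isOpen, rfl, hopen.ge⟩)
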